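/- The graph of the 3-dimensional cube (the 3-cube graph Q₃) has no spanning tree without degree-2 vertices; i.e., every spanning tree of Q₃ contains a vertex of degree 2. -/

import Mathlib

/-!
A spanning tree `T` of `Q₃` has `7` edges, and its degrees lie between `1` and `3`, so without a
vertex of degree `2` every degree is odd. Colour the vertices of `Q₃` by the parity of their
coordinate sum: every edge joins the two colour classes, so the degrees over the `4` even
vertices add up to the number of edges of `T`. A sum of four odd numbers is even, but `7` is odd.
-/

/-- The 3-cube graph `Q₃` on vertex set `{0,1}³`: two vertices are adjacent iff they differ
in exactly one coordinate. -/
def cubeGraphQ3 : SimpleGraph (Fin 3 → Fin 2) where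
  Adj x y := (Finset.univ.filter fun i => x i ≠ y i).card = 1
  symm := by
    constructor
    intro x y h
    simpa [ne_comm] using h
  loopless := by
    constructor
    intro x h
    simp at h

open Finset

namespace SimpleGraph

variable {V : Type*} {G H : SimpleGraph V}

theorem IsBipartiteWith.mono {s t : Set V} (hle : H ≤ G) (h : G.IsBipartiteWith s t) :
    H.IsBipartiteWith s t :=
  ⟨h.disjoint, fun _ _ hvw => h.mem_of_adj (hle hvw)⟩

variable [Fintype V] [DecidableRel G.Adj] {s t : Finset V}

theorem IsBipartiteWith.exists_even_degree_of_odd_card_edgeFinset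
    (h : G.IsBipartiteWith ↑s ↑t) (hs : Even #s) (hE : Odd #G.edgeFinset) :
    ∃ v ∈ s, Even (G.degree v) := by
  by_contra! hodd
  have hfilter : {v ∈ s | Odd (G.degree v)} = s :=
    filter_true_of_mem fun v hv => Nat.not_even_iff_odd.mp (hodd v hv)
  have hsum : Even (∑ v ∈ s, G.degree v) := by
    rwa [even_sum_iff_even_card_odd, hfilter]
  rw [isBipartiteWith_sum_degrees_eq_card_edges h] at hsum
  exact Nat.not_even_iff_odd.mpr hE hsum

theorem IsTree.exists_even_degree (hG : G.IsTree) (h : G.IsBipartiteWith ↑s ↑t)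
    (hs : Even #s) (hV : Even (Fintype.card V)) : ∃ v ∈ s, Even (G.degree v) := by
  refine h.exists_even_degree_of_odd_card_edgeFinset hs ?_
  rwa [← hG.card_edgeFinset, Nat.even_add_one, Nat.not_even_iff_odd] at hV

end SimpleGraph

open SimpleGraph

instance : DecidableRel cubeGraphQ3.Adj := fun x y =>
  inferInstanceAs (Decidable (#{i | x i ≠ y i} = 1))

theorem cubeGraphQ3_isRegularOfDegree_three : cubeGraphQ3.IsRegularOfDegree 3 := by
  unfold IsRegularOfDegree
  decide

def cubeParityClass (b : Fin 2) : Finset (Fin 3 → Fin 2) := {v | ∑ i, v i = b}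

theorem cubeGraphQ3_isBipartiteWith_parityClass :
    cubeGraphQ3.IsBipartiteWith ↑(cubeParityClass 0) ↑(cubeParityClass 1) := by
  constructor
  · rw [Finset.disjoint_coe]
    decide
  · intro v w
    simp only [Finset.mem_coe]
    revert v w
    decide

/-- The 3-cube graph `Q₃` has no spanning tree without degree-2 vertices
(it is HIST-free): every spanning tree of `Q₃` contains a vertex of degree 2. -/
theorem cube_has_no_HIST (T : SimpleGraph (Fin 3 → Fin 2)) [DecidableRel T.Adj]
    (hle : T ≤ cubeGraphQ3) (hT : T.IsTree) :
    ∃ v, T.degree v = 2 := by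
  have hbip : T.IsBipartiteWith ↑(cubeParityClass 0) ↑(cubeParityClass 1) :=
    cubeGraphQ3_isBipartiteWith_parityClass.mono hle
  obtain ⟨v, -, ⟨k, hk⟩⟩ := hT.exists_even_degree hbip (by decide) (by simp [Nat.even_iff])
  have hpos : 0 < T.degree v := hT.connected.preconnected.degree_pos_of_nontrivial v
  have hle3 : T.degree v ≤ 3 :=
    (degree_le_of_le hle).trans_eq (cubeGraphQ3_isRegularOfDegree_three v)
  exact ⟨v, by omega⟩
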